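/- Modulo I_{q+1}, the element T_q(s; r_1,…,r_q) is independent of s and additive in each r_i: T_q(s; r_1,…,r_q) ≡ T_q(s'; r_1,…,r_q) mod I_{q+1}, and T_q(s; r_1 + n_1, r_2,…,r_q) ≡ T_q(s; r_1, r_2,…,r_q) + T_q(s; n_1, r_2,…,r_q) mod I_{q+1}. Consequently dim(I_q / I_{q+1}) ≤ N^q. -/

import Mathlib

/-- The element `T(r)` (with the convention `T(0) = 0`). -/
noncomputable def TT {N : ℕ} (r : Fin N → ℤ) : (Fin N → ℤ) →₀ ℂ :=
  Finsupp.single r 1 - Finsupp.single 0 1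

/-- `T_q(s; r_1, …, r_q) = Σ_{I ⊆ {1,…,q}} (-1)^{|I|} T(s + Σ_{i∈I} r_i)`. -/
noncomputable def Tq {N : ℕ} (q : ℕ) (s : Fin N → ℤ) (r : Fin q → (Fin N → ℤ)) :
    (Fin N → ℤ) →₀ ℂ :=
  ∑ I : Finset (Fin q), ((-1 : ℂ) ^ I.card) • TT (s + ∑ i ∈ I, r i)

/-- `I_q` is the span of all the `T_q` expressions. -/
noncomputable def Iq (N q : ℕ) : Submodule ℂ ((Fin N → ℤ) →₀ ℂ) :=
  Submodule.span ℂ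
    {x | ∃ (s : Fin N → ℤ) (r : Fin q → (Fin N → ℤ)), x = Tq q s r}

/-!
Identify `(Fin N → ℤ) →₀ ℂ` with the group algebra `ℂ[ℤ^N]`, so that `T(r) = X^r - 1`. For `q ≥ 1`
the constants cancel in the alternating sum and `T_q(s; r) = X^s ∏ᵢ (1 - X^{rᵢ})`. Hence
`T_q(s; r) - T_q(s'; r) = T_{q+1}(s; s' - s, r)`, and
`1 - X^{a+b} = (1 - X^a) + (1 - X^b) - (1 - X^a)(1 - X^b)` gives
`T_q(…, a + b, …) - T_q(…, a, …) - T_q(…, b, …) = -T_{q+1}(s; a, …, b, …)`.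
So `r ↦ T_q(0; r)` is `ℤ`-multilinear modulo `I_{q+1}`, and modulo `I_{q+1}` every generator of
`I_q` lies in the span of its `N^q` values on tuples of standard basis vectors.
-/

open AddMonoidAlgebra Finset

lemma sum_neg_one_pow_card (R ι : Type*) [CommRing R] [Fintype ι] [Nonempty ι] :
    ∑ I : Finset ι, (-1 : R) ^ #I = 0 := by
  simpa using Fintype.sum_pow_mul_eq_add_pow ι (-1 : R) 1

section GroupAlgebra

variable {k G ι : Type*} [CommRing k] [AddCommGroup G]

lemma of'_add (a b : G) : of' k G (a + b) = of' k G a * of' k G b := by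
  simp [of'_apply]

lemma prod_of' (s : Finset ι) (r : ι → G) : ∏ i ∈ s, of' k G (r i) = of' k G (∑ i ∈ s, r i) := by
  simp only [of'_eq_of, ← map_prod, ofAdd_sum]

lemma prod_one_sub_of' [Fintype ι] (r : ι → G) :
    ∏ i, (1 - of' k G (r i)) = ∑ I : Finset ι, (-1 : k) ^ #I • of' k G (∑ i ∈ I, r i) := by
  classical
  rw [prod_sub, powerset_univ]
  refine sum_congr rfl fun I _ => ?_
  rw [prod_const_one, mul_one, prod_of', Algebra.smul_def, map_pow, map_neg, map_one]

lemma prod_one_sub_of'_update [Fintype ι] [DecidableEq ι] (r : ι → G) (j : ι) (v : G) :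
    ∏ i, (1 - of' k G (Function.update r j v i))
      = (1 - of' k G v) * ∏ i ∈ univ.erase j, (1 - of' k G (r i)) := by
  rw [← mul_prod_erase univ _ (mem_univ j), Function.update_self]
  congr 1
  exact prod_congr rfl fun i hi => by rw [Function.update_of_ne (ne_of_mem_erase hi)]

end GroupAlgebra

variable {N q : ℕ}

lemma Tq_eq_coeff (hq : q ≠ 0) (s : Fin N → ℤ) (r : Fin q → Fin N → ℤ) :
    Tq q s r = coeffAddEquiv (of' ℂ _ s * ∏ i, (1 - of' ℂ _ (r i))) := by
  have : Nonempty (Fin q) := ⟨⟨0, Nat.pos_of_ne_zero hq⟩⟩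
  simp only [coeffAddEquiv_apply, prod_one_sub_of', mul_sum, mul_smul_comm, ← of'_add,
    coeff_sum, coeff_smul, Tq, TT, smul_sub, sum_sub_distrib, ← sum_smul,
    sum_neg_one_pow_card ℂ, zero_smul, sub_zero]
  rfl

lemma Tq_sub_Tq (hq : q ≠ 0) (s s' : Fin N → ℤ) (r : Fin q → Fin N → ℤ) :
    Tq q s r - Tq q s' r = Tq (q + 1) s (Fin.cons (s' - s) r) := by
  have hs' : of' ℂ _ s' = of' ℂ _ s * of' ℂ _ (s' - s) := by rw [← of'_add, add_sub_cancel]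
  rw [Tq_eq_coeff hq, Tq_eq_coeff hq, Tq_eq_coeff q.succ_ne_zero, Fin.prod_univ_succ, hs',
    ← map_sub]
  congr 1
  simp only [Fin.cons_zero, Fin.cons_succ]
  ring

lemma Tq_update_add_sub (hq : q ≠ 0) (s : Fin N → ℤ) (r : Fin q → Fin N → ℤ) (j : Fin q)
    (a b : Fin N → ℤ) :
    Tq q s (Function.update r j (a + b)) - Tq q s (Function.update r j a)
      - Tq q s (Function.update r j b) = -Tq (q + 1) s (Fin.cons a (Function.update r j b)) := by
  rw [Tq_eq_coeff hq, Tq_eq_coeff hq, Tq_eq_coeff hq, Tq_eq_coeff q.succ_ne_zero,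
    Fin.prod_univ_succ, ← map_sub, ← map_sub, ← map_neg]
  congr 1
  simp only [Fin.cons_zero, Fin.cons_succ, prod_one_sub_of'_update, of'_add]
  ring

lemma Tq_mem_Iq (s : Fin N → ℤ) (r : Fin q → Fin N → ℤ) : Tq q s r ∈ Iq N q :=
  Submodule.subset_span ⟨s, r, rfl⟩

lemma Tq_sub_Tq_mem (hq : q ≠ 0) (s s' : Fin N → ℤ) (r : Fin q → Fin N → ℤ) :
    Tq q s r - Tq q s' r ∈ Iq N (q + 1) :=
  Tq_sub_Tq hq s s' r ▸ Tq_mem_Iq _ _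

lemma Tq_update_add_sub_mem (hq : q ≠ 0) (s : Fin N → ℤ) (r : Fin q → Fin N → ℤ) (j : Fin q)
    (a b : Fin N → ℤ) :
    Tq q s (Function.update r j (a + b)) - Tq q s (Function.update r j a)
      - Tq q s (Function.update r j b) ∈ Iq N (q + 1) :=
  Tq_update_add_sub hq s r j a b ▸ neg_mem (Tq_mem_Iq _ _)

lemma mkQ_Tq_update_add (hq : q ≠ 0) (s : Fin N → ℤ) (r : Fin q → Fin N → ℤ) (j : Fin q)
    (a b : Fin N → ℤ) :
    (Iq N (q + 1)).mkQ (Tq q s (Function.update r j (a + b)))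
      = (Iq N (q + 1)).mkQ (Tq q s (Function.update r j a))
        + (Iq N (q + 1)).mkQ (Tq q s (Function.update r j b)) := by
  rw [← map_add, Submodule.mkQ_apply, Submodule.mkQ_apply, Submodule.Quotient.eq, ← sub_sub]
  exact Tq_update_add_sub_mem hq s r j a b

noncomputable def multilinearTqMod (N : ℕ) {q : ℕ} (hq : q ≠ 0) :
    MultilinearMap ℤ (fun _ : Fin q => Fin N → ℤ) (((Fin N → ℤ) →₀ ℂ) ⧸ Iq N (q + 1)) :=
  MultilinearMap.mk' (fun r => (Iq N (q + 1)).mkQ (Tq q 0 r)) (mkQ_Tq_update_add hq 0)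
    fun r j c a => map_zsmul (AddMonoidHom.mk'
      (fun v => (Iq N (q + 1)).mkQ (Tq q 0 (Function.update r j v))) (mkQ_Tq_update_add hq 0 r j)) c a

lemma MultilinearMap.mem_span_range_single {R ι κ M : Type*} [CommSemiring R] [AddCommMonoid M]
    [Module R M] [Fintype ι] [DecidableEq ι] [Fintype κ] [DecidableEq κ]
    (f : MultilinearMap R (fun _ : ι => κ → R) M) (m : ι → κ → R) :
    f m ∈ Submodule.span R (Set.range fun J : ι → κ => f fun i => Pi.single (J i) 1) := by
  have hm : m = fun i => ∑ j, m i j • Pi.single j (1 : R) := by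
    ext i l
    simp [Pi.single_apply]
  rw [hm, f.map_sum]
  refine Submodule.sum_mem _ fun J _ => ?_
  rw [f.map_smul_univ]
  exact Submodule.smul_mem _ _ (Submodule.subset_span ⟨J, rfl⟩)

lemma map_mkQ_Iq_le_span (hq : q ≠ 0) :
    (Iq N q).map (Iq N (q + 1)).mkQ ≤ Submodule.span ℂ (Set.range fun J : Fin q → Fin N =>
      (Iq N (q + 1)).mkQ (Tq q 0 fun i => Pi.single (J i) 1)) := by
  rw [Submodule.map_le_iff_le_comap]
  refine Submodule.span_le.2 ?_
  rintro _ ⟨s, r, rfl⟩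
  have hs : (Iq N (q + 1)).mkQ (Tq q s r) = multilinearTqMod N hq r := by
    change _ = (Iq N (q + 1)).mkQ (Tq q 0 r)
    rw [Submodule.mkQ_apply, Submodule.mkQ_apply, Submodule.Quotient.eq]
    exact Tq_sub_Tq_mem hq s 0 r
  rw [SetLike.mem_coe, Submodule.mem_comap, hs]
  exact Submodule.span_le_restrictScalars ℤ ℂ _ ((multilinearTqMod N hq).mem_span_range_single r)

lemma rank_map_mkQ_Iq_le (hq : q ≠ 0) :
    Module.rank ℂ ((Iq N q).map (Iq N (q + 1)).mkQ) ≤ (N : Cardinal) ^ q :=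
  (Submodule.rank_mono (map_mkQ_Iq_le_span hq)).trans <|
    (rank_span_le _).trans <| Cardinal.mk_range_le.trans_eq (by simp)

theorem Tq_mod_Iq_succ (N : ℕ) :
    (∀ (q : ℕ), 1 ≤ q → ∀ (s s' : Fin N → ℤ) (r : Fin q → (Fin N → ℤ)),
      Tq q s r - Tq q s' r ∈ Iq N (q + 1)) ∧
    (∀ (q : ℕ) (s r₁ n₁ : Fin N → ℤ) (rest : Fin q → (Fin N → ℤ)),
      Tq (q + 1) s (Fin.cons (r₁ + n₁) rest)
        - Tq (q + 1) s (Fin.cons r₁ rest)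
        - Tq (q + 1) s (Fin.cons n₁ rest) ∈ Iq N (q + 2)) ∧
    (∀ q : ℕ, 1 ≤ q →
      Module.rank ℂ ↥((Iq N q).map (Iq N (q + 1)).mkQ)
        ≤ (N : Cardinal) ^ q) := by
  refine ⟨fun q hq => Tq_sub_Tq_mem (Nat.one_le_iff_ne_zero.mp hq),
    fun q s r₁ n₁ rest => ?_, fun q hq => rank_map_mkQ_Iq_le (Nat.one_le_iff_ne_zero.mp hq)⟩
  simpa only [Fin.update_cons_zero] using
    Tq_update_add_sub_mem q.succ_ne_zero s (Fin.cons r₁ rest) 0 r₁ n₁
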